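/- Let R be a commutative ring and M a nonzero finitely generated R-module containing a submodule isomorphic to R/Ann_R(M) (e.g., M an R-algebra faithful over R/Ann_R(M)). If for every r ∈ R multiplication by r on M is zero or bijective, then the prime ideal Ann_R(M) is a maximal ideal of R. -/

import Mathlib

/-!
If `r ∉ Ann(M)` then `r` acts surjectively, i.e. `M = r • M`. Nakayama's lemma (in its
determinant-trick form) then gives `s ≡ 1 mod r` with `s • M = 0`, so `Ann(M) + (r) = R`.
Hence every element outside the proper ideal `Ann(M)` is invertible modulo it.
-/

theorem Ideal.isMaximal_of_forall_sup_span_singleton_eq_top {R : Type*} [CommRing R]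
    {I : Ideal R} (hI : I ≠ ⊤) (hsup : ∀ r ∉ I, I ⊔ Ideal.span {r} = ⊤) : I.IsMaximal := by
  refine Ideal.isMaximal_iff.mpr ⟨(Ideal.ne_top_iff_one I).mp hI, fun J r hIJ hrI hrJ => ?_⟩
  have hle : I ⊔ Ideal.span {r} ≤ J := sup_le hIJ (Ideal.span_singleton_le_iff_mem J |>.mpr hrJ)
  exact hle ((hsup r hrI).symm ▸ Submodule.mem_top)

theorem Module.annihilator_sup_span_singleton_eq_top_of_surjective {R M : Type*} [CommRing R]
    [AddCommGroup M] [Module R M] [Module.Finite R M] {r : R}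
    (hr : Function.Surjective (fun m : M => r • m)) :
    Module.annihilator R M ⊔ Ideal.span {r} = ⊤ := by
  have hle : (⊤ : Submodule R M) ≤ Ideal.span {r} • ⊤ := fun m _ => by
    obtain ⟨m', rfl⟩ := hr m
    exact Submodule.smul_mem_smul (Ideal.mem_span_singleton_self r) Submodule.mem_top
  obtain ⟨s, hs1, hs0⟩ :=
    Submodule.exists_sub_one_mem_and_smul_eq_zero_of_fg_of_le_smul _ _ Module.Finite.fg_top hle
  have hsAnn : s ∈ Module.annihilator R M :=
    Module.mem_annihilator.mpr fun m => hs0 m Submodule.mem_top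
  rw [Ideal.eq_top_iff_one, show (1 : R) = s - (s - 1) by ring]
  exact Ideal.sub_mem _ (Ideal.mem_sup_left hsAnn) (Ideal.mem_sup_right hs1)

theorem stmt3_general {R M : Type*} [CommRing R] [AddCommGroup M] [Module R M] [Nontrivial M]
    [Module.Finite R M]
    (h : ∀ r : R, (∀ m : M, r • m = 0) ∨ Function.Bijective (fun m : M => r • m)) :
    (Module.annihilator R M).IsMaximal := by
  refine Ideal.isMaximal_of_forall_sup_span_singleton_eq_top ?_ fun r hr => ?_
  · rw [Ne, Module.annihilator_eq_top_iff]
    exact not_subsingleton M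
  · have hbij := (h r).resolve_left (mt Module.mem_annihilator.mpr hr)
    exact Module.annihilator_sup_span_singleton_eq_top_of_surjective hbij.2

/-- If a nonzero finitely generated module `M` over a commutative ring `R` contains a
submodule isomorphic to `R/Ann_R(M)` and every `r : R` acts on `M` by zero or
bijectively, then `Ann_R(M)` is a maximal ideal. -/
theorem stmt3 {R M : Type*} [CommRing R] [AddCommGroup M] [Module R M] [Nontrivial M]
    [Module.Finite R M]
    (hsub : ∃ N : Submodule R M, Nonempty (N ≃ₗ[R] (R ⧸ Module.annihilator R M)))
    (h : ∀ r : R, (∀ m : M, r • m = 0) ∨ Function.Bijective (fun m : M => r • m)) :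
    (Module.annihilator R M).IsMaximal :=
  stmt3_general h
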